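/- arXiv:2209.10871 — 9 statements merged into one kernel-verified Lean document; each statement's English description precedes it below -/
import Mathlib

section
/- Suppose T : L^∞(Ω,F) → ℝ satisfies T(0) = 0, is G-quasilinear, and is monotone on L^∞(Ω,G) (i.e., g₁(ω) ≤ g₂(ω) for all ω implies T(g₁) ≤ T(g₂) for G-measurable bounded g₁, g₂). Then the class of irrelevant events N_G = {N ∈ G : T(g₁ + g₂·1_N) = T(g₁) for all bounded G-measurable g₁, g₂} coincides with the set {A ∈ G : T(x·1_A) = 0 for all x ∈ ℝ}. -/
open Filter Topology MeasureTheory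

/-- Bounded measurable real-valued functions w.r.t. a σ-algebra `mG`. -/
def BddMeas {Ω : Type*} (mG : MeasurableSpace Ω) (f : Ω → ℝ) : Prop :=
  Measurable[mG] f ∧ ∃ C : ℝ, ∀ ω, |f ω| ≤ C

/-- The class of irrelevant (null) events in `mG` for the functional `T`. -/
def NullG {Ω : Type*} (mG : MeasurableSpace Ω) (T : (Ω → ℝ) → ℝ) : Set (Set Ω) :=
  {N | MeasurableSet[mG] N ∧ ∀ g₁ g₂ : Ω → ℝ, BddMeas mG g₁ → BddMeas mG g₂ →
    T (g₁ + N.indicator g₂) = T g₁}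

/-- (G-Mo): `T` is `G`-monotone. -/
def GMo {Ω : Type*} (mG : MeasurableSpace Ω) (T : (Ω → ℝ) → ℝ) : Prop :=
  ∀ x y : ℝ, x < y → ∀ g : Ω → ℝ, BddMeas mG g → ∀ A : Set Ω,
    MeasurableSet[mG] A → A ∉ NullG mG T →
    T (A.indicator (fun _ => x) + Aᶜ.indicator g) <
      T (A.indicator (fun _ => y) + Aᶜ.indicator g)

/-- (G-QL): `T` is `G`-quasilinear. -/
def GQL {Ω : Type*} (mG : MeasurableSpace Ω) (T : (Ω → ℝ) → ℝ) : Prop :=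
  ∀ g₁ g₂ : Ω → ℝ, BddMeas mG g₁ → BddMeas mG g₂ → ∀ A : Set Ω, MeasurableSet[mG] A →
    (∃ gb : Ω → ℝ, BddMeas mG gb ∧
      T (A.indicator g₁ + Aᶜ.indicator gb) ≤ T (A.indicator g₂ + Aᶜ.indicator gb)) →
    ∀ g : Ω → ℝ, BddMeas mG g →
      T (A.indicator g₁ + Aᶜ.indicator g) ≤ T (A.indicator g₂ + Aᶜ.indicator g)

/-- (G-PC): `T` is `G`-pointwise continuous. -/
def GPC {Ω : Type*} (mG : MeasurableSpace Ω) (T : (Ω → ℝ) → ℝ) : Prop :=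
  ∀ (gn : ℕ → Ω → ℝ) (g : Ω → ℝ), (∀ n, BddMeas mG (gn n)) → BddMeas mG g →
    (∃ C : ℝ, ∀ n ω, |gn n ω| ≤ C) →
    (∀ ω, Tendsto (fun n => gn n ω) atTop (𝓝 (g ω))) →
    Tendsto (fun n => T (gn n)) atTop (𝓝 (T g))

/-- The sup norm of a bounded function. -/
noncomputable def supNorm {Ω : Type*} (f : Ω → ℝ) : ℝ := ⨆ ω, |f ω|

/-- (G-PS): `T` is `G`-pasting at `f`. -/
def GPS {Ω : Type*} (mG : MeasurableSpace Ω) (T : (Ω → ℝ) → ℝ) (f : Ω → ℝ) : Prop :=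
  ∀ A₁ A₂ : Set Ω, MeasurableSet[mG] A₁ → MeasurableSet[mG] A₂ → Disjoint A₁ A₂ →
    ∀ x₁ x₂ : ℝ, T (A₁.indicator f) = T (A₁.indicator fun _ => x₁) →
      T (A₂.indicator f) = T (A₂.indicator fun _ => x₂) →
      T (A₁.indicator f + A₂.indicator f) =
        T (A₁.indicator (fun _ => x₁) + A₂.indicator fun _ => x₂)

/-- (G-NB): `T` is `G`-norm bounded at `f`. -/
def GNB {Ω : Type*} (mG : MeasurableSpace Ω) (T : (Ω → ℝ) → ℝ) (f : Ω → ℝ) : Prop :=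
  ∀ A : Set Ω, MeasurableSet[mG] A →
    T (A.indicator fun _ => -(supNorm f)) ≤ T (A.indicator f) ∧
    T (A.indicator f) ≤ T (A.indicator fun _ => supNorm f)

theorem stmt3 {Ω : Type*} (mF mG : MeasurableSpace Ω) (hsub : mG ≤ mF)
    (T : (Ω → ℝ) → ℝ) (hT0 : T 0 = 0) (hQL : GQL mG T)
    (hmono : ∀ g₁ g₂ : Ω → ℝ, BddMeas mG g₁ → BddMeas mG g₂ →
      (∀ ω, g₁ ω ≤ g₂ ω) → T g₁ ≤ T g₂) :
    NullG mG T =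
      {A : Set Ω | MeasurableSet[mG] A ∧ ∀ x : ℝ, T (A.indicator fun _ => x) = 0} := by
  ext A
  simp only [Set.mem_setOf_eq, NullG]
  constructor
  · rintro ⟨hA, hN⟩
    refine ⟨hA, fun x => ?_⟩
    have h := hN 0 (fun _ => x) ⟨measurable_const, 0, by simp⟩
      ⟨measurable_const, |x|, fun ω => le_refl _⟩
    simpa [hT0] using h
  · rintro ⟨hA, hzero⟩
    have bddInd : ∀ (B : Set Ω), MeasurableSet[mG] B → ∀ f : Ω → ℝ, BddMeas mG f →
        BddMeas mG (B.indicator f) := by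
      rintro B hB f ⟨hfm, C, hC⟩
      refine ⟨hfm.indicator hB, |C|, fun ω => ?_⟩
      by_cases h : ω ∈ B
      · simpa [Set.indicator, h] using (hC ω).trans (le_abs_self C)
      · simpa [Set.indicator, h] using abs_nonneg C
    have bddConst : ∀ c : ℝ, BddMeas mG (fun _ : Ω => c) :=
      fun c => ⟨measurable_const, |c|, fun ω => le_refl _⟩
    have key : ∀ f : Ω → ℝ, BddMeas mG f → T (A.indicator f) = 0 := by
      rintro f hf
      obtain ⟨hfm, C, hC⟩ := hf
      have h1 : T (A.indicator fun _ => -C) ≤ T (A.indicator f) := by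
        refine hmono _ _ (bddInd A hA _ (bddConst _)) (bddInd A hA f ⟨hfm, C, hC⟩) fun ω => ?_
        by_cases h : ω ∈ A <;> simp [Set.indicator, h]
        linarith [(abs_le.mp (hC ω)).1]
      have h2 : T (A.indicator f) ≤ T (A.indicator fun _ => C) := by
        refine hmono _ _ (bddInd A hA f ⟨hfm, C, hC⟩) (bddInd A hA _ (bddConst _)) fun ω => ?_
        by_cases h : ω ∈ A <;> simp [Set.indicator, h]
        exact (abs_le.mp (hC ω)).2
      rw [hzero (-C)] at h1
      rw [hzero C] at h2
      linarith
    have step : ∀ f₁ f₂ g : Ω → ℝ, BddMeas mG f₁ → BddMeas mG f₂ → BddMeas mG g →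
        T (A.indicator f₁ + Aᶜ.indicator g) ≤ T (A.indicator f₂ + Aᶜ.indicator g) := by
      intro f₁ f₂ g hf₁ hf₂ hg
      refine hQL f₁ f₂ hf₁ hf₂ A hA ⟨fun _ => 0, bddConst 0, ?_⟩ g hg
      have e : ∀ f : Ω → ℝ, A.indicator f + Aᶜ.indicator (fun _ : Ω => (0:ℝ)) = A.indicator f := by
        intro f; funext ω; simp [Set.indicator]
      rw [e, e, key f₁ hf₁, key f₂ hf₂]
    have eqstep : ∀ f₁ f₂ g : Ω → ℝ, BddMeas mG f₁ → BddMeas mG f₂ → BddMeas mG g →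
        T (A.indicator f₁ + Aᶜ.indicator g) = T (A.indicator f₂ + Aᶜ.indicator g) :=
      fun f₁ f₂ g h1 h2 h3 => le_antisymm (step f₁ f₂ g h1 h2 h3) (step f₂ f₁ g h2 h1 h3)
    refine ⟨hA, fun g₁ g₂ hg₁ hg₂ => ?_⟩
    have e1 : g₁ + A.indicator g₂ = A.indicator (g₁ + g₂) + Aᶜ.indicator g₁ := by
      funext ω; by_cases h : ω ∈ A <;> simp [Set.indicator, h] <;> ring
    have e2 : g₁ = A.indicator g₁ + Aᶜ.indicator g₁ := by
      funext ω; by_cases h : ω ∈ A <;> simp [Set.indicator, h]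
    rw [e1]
    conv_rhs => rw [e2]
    exact eqstep (g₁ + g₂) g₁ g₁ ⟨hg₁.1.add hg₂.1, by
      obtain ⟨C₁, h₁⟩ := hg₁.2; obtain ⟨C₂, h₂⟩ := hg₂.2
      exact ⟨C₁ + C₂, fun ω => (abs_add_le _ _).trans (add_le_add (h₁ ω) (h₂ ω))⟩⟩ hg₁ hg₁
end

section
/- Suppose T : L^∞(Ω,F) → ℝ satisfies T(0) = 0, is G-quasilinear, and is G-pointwise continuous. Then a countable union of irrelevant events in N_G is again in N_G. -/
open Filter Topology MeasureTheory

lemma BddMeas.add {Ω : Type*} {mG : MeasurableSpace Ω} {f g : Ω → ℝ}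
    (hf : BddMeas mG f) (hg : BddMeas mG g) : BddMeas mG (f + g) := by
  obtain ⟨hfm, Cf, hCf⟩ := hf
  obtain ⟨hgm, Cg, hCg⟩ := hg
  exact ⟨hfm.add hgm, Cf + Cg, fun ω => (abs_add_le _ _).trans (add_le_add (hCf ω) (hCg ω))⟩

lemma abs_indicator_le_of_bound {Ω : Type*} {g : Ω → ℝ} {C : ℝ} (hC : ∀ ω, |g ω| ≤ C)
    (N : Set Ω) (ω : Ω) : |N.indicator g ω| ≤ C := by
  simpa only [Real.norm_eq_abs] using
    (norm_indicator_le_norm_self (s := N) (f := g) (a := ω)).trans (hC ω)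

lemma BddMeas.indicator {Ω : Type*} {mG : MeasurableSpace Ω} {g : Ω → ℝ} {N : Set Ω}
    (hg : BddMeas mG g) (hN : MeasurableSet[mG] N) : BddMeas mG (N.indicator g) := by
  obtain ⟨hgm, C, hC⟩ := hg
  exact ⟨hgm.indicator hN, C, abs_indicator_le_of_bound hC N⟩

section NullG

variable {Ω : Type*} {mG : MeasurableSpace Ω} {T : (Ω → ℝ) → ℝ}

lemma mem_nullG_of_subset {N M : Set Ω} (hN : N ∈ NullG mG T) (hM : MeasurableSet[mG] M)
    (hMN : M ⊆ N) : M ∈ NullG mG T := by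
  refine ⟨hM, fun g₁ g₂ hg₁ hg₂ => ?_⟩
  have hind : M.indicator g₂ = N.indicator (M.indicator g₂) := by
    rw [Set.indicator_indicator, Set.inter_eq_right.mpr hMN]
  rw [hind]
  exact hN.2 g₁ _ hg₁ (hg₂.indicator hM)

lemma union_mem_nullG {N₁ N₂ : Set Ω} (h₁ : N₁ ∈ NullG mG T) (h₂ : N₂ ∈ NullG mG T) :
    N₁ ∪ N₂ ∈ NullG mG T := by
  refine ⟨h₁.1.union h₂.1, fun g₁ g₂ hg₁ hg₂ => ?_⟩
  have hdiff : N₂ \ N₁ ∈ NullG mG T := mem_nullG_of_subset h₂ (h₂.1.diff h₁.1) Set.sdiff_subset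
  have hsplit : (N₁ ∪ N₂).indicator g₂ = N₁.indicator g₂ + (N₂ \ N₁).indicator g₂ := by
    rw [← Set.union_sdiff_self, Set.indicator_union_of_disjoint disjoint_sdiff_self_right]; rfl
  rw [hsplit, ← add_assoc, hdiff.2 _ g₂ (hg₁.add (hg₂.indicator h₁.1)) hg₂, h₁.2 g₁ g₂ hg₁ hg₂]

lemma accumulate_mem_nullG {A : ℕ → Set Ω} (hA : ∀ n, A n ∈ NullG mG T) (n : ℕ) :
    Set.accumulate A n ∈ NullG mG T := by
  induction n with
  | zero => simpa only [Set.accumulate_zero_nat] using hA 0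
  | succ n ih => simpa only [Set.accumulate_succ] using union_mem_nullG ih (hA (n + 1))

/-- Along an increasing sequence `T (g₁ + (N n).indicator g₂)` is constant, and the arguments
converge pointwise and boundedly to `g₁ + (⋃ n, N n).indicator g₂`. -/
lemma iUnion_mem_nullG_of_monotone (hPC : GPC mG T) {N : ℕ → Set Ω} (hmono : Monotone N)
    (hN : ∀ n, N n ∈ NullG mG T) : (⋃ n, N n) ∈ NullG mG T := by
  have hU : MeasurableSet[mG] (⋃ n, N n) := MeasurableSet.iUnion fun n => (hN n).1
  refine ⟨hU, fun g₁ g₂ hg₁ hg₂ => ?_⟩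
  obtain ⟨C₁, hC₁⟩ := hg₁.2
  obtain ⟨C₂, hC₂⟩ := hg₂.2
  have hbound : ∃ C : ℝ, ∀ n ω, |(g₁ + (N n).indicator g₂) ω| ≤ C :=
    ⟨C₁ + C₂, fun n ω =>
      (abs_add_le _ _).trans (add_le_add (hC₁ ω) (abs_indicator_le_of_bound hC₂ _ ω))⟩
  have hconv : ∀ ω, Tendsto (fun n => (g₁ + (N n).indicator g₂) ω) atTop
      (𝓝 ((g₁ + (⋃ n, N n).indicator g₂) ω)) := fun ω =>
    ((hmono.tendsto_indicator N g₂ ω).mono_right (pure_le_nhds _)).const_add (g₁ ω)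
  have hlim := hPC _ _ (fun n => hg₁.add (hg₂.indicator (hN n).1)) (hg₁.add (hg₂.indicator hU))
    hbound hconv
  simp only [fun n => (hN n).2 g₁ g₂ hg₁ hg₂] at hlim
  exact tendsto_nhds_unique hlim tendsto_const_nhds

end NullG

theorem stmt5_general {Ω : Type*} (mG : MeasurableSpace Ω)
    (T : (Ω → ℝ) → ℝ) (hPC : GPC mG T) :
    ∀ A : ℕ → Set Ω, (∀ n, A n ∈ NullG mG T) → (⋃ n, A n) ∈ NullG mG T := by
  intro A hA
  rw [← Set.iUnion_accumulate]
  exact iUnion_mem_nullG_of_monotone hPC Set.monotone_accumulate (accumulate_mem_nullG hA)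

theorem stmt5 {Ω : Type*} (mF mG : MeasurableSpace Ω) (hsub : mG ≤ mF)
    (T : (Ω → ℝ) → ℝ) (hT0 : T 0 = 0) (hQL : GQL mG T) (hPC : GPC mG T) :
    ∀ A : ℕ → Set Ω, (∀ n, A n ∈ NullG mG T) → (⋃ n, A n) ∈ NullG mG T :=
  stmt5_general mG T hPC
end

section
/- Suppose T : L^∞(Ω,F) → ℝ satisfies T(0) = 0, (G-Mo), (G-QL), (G-PC), and T satisfies (G-PS) and (G-NB) at a fixed bounded F-measurable f. Then for arbitrary finite collections of mutually disjoint sets A₁,…,A_N ∈ G and bounded G-measurable g₁,…,g_N with T(f·1_{A_i}) = T(g_i·1_{A_i}) for each i, we have T(Σ_i f·1_{A_i}) = T(Σ_i g_i·1_{A_i}). -/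
open Filter Topology MeasureTheory

section Aux
variable {Ω : Type*} {mG : MeasurableSpace Ω} {T : (Ω → ℝ) → ℝ}

lemma bddMeas_zero : BddMeas mG (0 : Ω → ℝ) := ⟨measurable_const, 0, by simp⟩

lemma bddMeas_const (c : ℝ) : BddMeas mG (fun _ : Ω => c) :=
  ⟨measurable_const, |c|, fun _ => le_refl _⟩

lemma bddMeas_indicator {g : Ω → ℝ} (hg : BddMeas mG g) {A : Set Ω}
    (hA : MeasurableSet[mG] A) : BddMeas mG (A.indicator g) := by
  obtain ⟨hm, C, hC⟩ := hg
  refine ⟨hm.indicator hA, C, fun ω => ?_⟩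
  by_cases h : ω ∈ A
  · simpa [Set.indicator_of_mem h] using hC ω
  · simp only [Set.indicator_of_notMem h, abs_zero]
    exact le_trans (abs_nonneg _) (hC ω)

lemma bddMeas_add {g₁ g₂ : Ω → ℝ} (h₁ : BddMeas mG g₁) (h₂ : BddMeas mG g₂) :
    BddMeas mG (g₁ + g₂) := by
  obtain ⟨hm₁, C₁, hC₁⟩ := h₁
  obtain ⟨hm₂, C₂, hC₂⟩ := h₂
  exact ⟨hm₁.add hm₂, C₁ + C₂, fun ω =>
    (abs_add_le _ _).trans (add_le_add (hC₁ ω) (hC₂ ω))⟩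

lemma bddMeas_sum {ι : Type*} {s : Finset ι} {g : ι → Ω → ℝ}
    (h : ∀ i ∈ s, BddMeas mG (g i)) : BddMeas mG (∑ i ∈ s, g i) :=
  Finset.sum_induction g (BddMeas mG) (fun _ _ => bddMeas_add) bddMeas_zero h

/-- Replacement lemma from (G-QL). -/
lemma replaceT (hQL : GQL mG T) {A : Set Ω} (hA : MeasurableSet[mG] A)
    {h₁ h₂ g : Ω → ℝ} (hb₁ : BddMeas mG h₁) (hb₂ : BddMeas mG h₂) (hbg : BddMeas mG g)
    (heq : T (A.indicator h₁) = T (A.indicator h₂)) :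
    T (A.indicator h₁ + Aᶜ.indicator g) = T (A.indicator h₂ + Aᶜ.indicator g) := by
  have key : ∀ u v : Ω → ℝ, BddMeas mG u → BddMeas mG v →
      T (A.indicator u) ≤ T (A.indicator v) →
      T (A.indicator u + Aᶜ.indicator g) ≤ T (A.indicator v + Aᶜ.indicator g) := by
    intro u v bu bv hle
    refine hQL u v bu bv A hA ⟨0, bddMeas_zero, ?_⟩ g hbg
    simpa [Set.indicator_zero'] using hle
  exact le_antisymm (key _ _ hb₁ hb₂ heq.le) (key _ _ hb₂ hb₁ heq.ge)

/-- Continuity of `t ↦ T (A.indicator (const t))`. -/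
lemma contT (hPC : GPC mG T) {A : Set Ω} (hA : MeasurableSet[mG] A) :
    Continuous (fun t : ℝ => T (A.indicator fun _ => t)) := by
  rw [continuous_iff_seqContinuous]
  intro u t hu
  have habs : Tendsto (fun n => |u n|) atTop (𝓝 |t|) := hu.abs
  obtain ⟨C, hC⟩ := habs.bddAbove_range
  have hCn : ∀ n, |u n| ≤ C := fun n => hC (Set.mem_range_self n)
  refine hPC (fun n => A.indicator fun _ => u n) (A.indicator fun _ => t)
    (fun n => bddMeas_indicator (bddMeas_const _) hA)
    (bddMeas_indicator (bddMeas_const _) hA) ⟨C, fun n ω => ?_⟩ (fun ω => ?_)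
  · by_cases h : ω ∈ A
    · simpa [Set.indicator_of_mem h] using hCn n
    · simp only [Set.indicator_of_notMem h, abs_zero]
      exact le_trans (abs_nonneg (u n)) (hCn n)
  · by_cases h : ω ∈ A
    · simpa [Set.indicator_of_mem h] using hu
    · simp [Set.indicator_of_notMem h]

/-- Existence of a constant with the same `T`-value on `A`, via IVT. -/
lemma existsConstT (hPC : GPC mG T) {f : Ω → ℝ} (hNB : GNB mG T f)
    (hM : -(supNorm f) ≤ supNorm f) {A : Set Ω} (hA : MeasurableSet[mG] A) :
    ∃ x : ℝ, T (A.indicator f) = T (A.indicator fun _ => x) := by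
  obtain ⟨h1, h2⟩ := hNB A hA
  have := intermediate_value_Icc hM (contT hPC hA).continuousOn (a := -(supNorm f))
    (b := supNorm f) ⟨h1, h2⟩
  obtain ⟨x, -, hx⟩ := this
  exact ⟨x, hx.symm⟩

end Aux


theorem stmt8 {Ω : Type*} (mF mG : MeasurableSpace Ω) (hsub : mG ≤ mF)
    (T : (Ω → ℝ) → ℝ) (hT0 : T 0 = 0) (hMo : GMo mG T) (hQL : GQL mG T) (hPC : GPC mG T)
    (f : Ω → ℝ) (hf : BddMeas mF f) (hPS : GPS mG T f) (hNB : GNB mG T f) :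
    ∀ (s : Finset ℕ) (A : ℕ → Set Ω) (g : ℕ → Ω → ℝ),
      (∀ i ∈ s, MeasurableSet[mG] (A i)) →
      (∀ i ∈ s, ∀ j ∈ s, i ≠ j → Disjoint (A i) (A j)) →
      (∀ i ∈ s, BddMeas mG (g i)) →
      (∀ i ∈ s, T ((A i).indicator f) = T ((A i).indicator (g i))) →
      T (∑ i ∈ s, (A i).indicator f) = T (∑ i ∈ s, (A i).indicator (g i)) := by
  classical
  rcases isEmpty_or_nonempty Ω with hΩ | hΩ
  · intro s A g _ _ _ _
    exact congrArg T (Subsingleton.elim _ _)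
  -- supNorm f is nonnegative
  have hM : -(supNorm f) ≤ supNorm f := by
    obtain ⟨ω₀⟩ := hΩ
    obtain ⟨C, hC⟩ := hf.2
    have hba : BddAbove (Set.range fun ω => |f ω|) :=
      ⟨C, fun x ⟨ω, hω⟩ => hω ▸ hC ω⟩
    have h0 : (0 : ℝ) ≤ supNorm f :=
      le_trans (abs_nonneg (f ω₀)) (le_ciSup hba ω₀)
    linarith
  intro s
  induction s using Finset.induction_on with
  | empty =>
    intro A g _ _ _ _
    simp
  | @insert a s ha ih =>
    intro A g hA hdisj hg hTeq
    have hAmem : ∀ i ∈ s, MeasurableSet[mG] (A i) :=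
      fun i hi => hA i (Finset.mem_insert_of_mem hi)
    have hamem : MeasurableSet[mG] (A a) := hA a (Finset.mem_insert_self a s)
    set B : Set Ω := ⋃ i ∈ s, A i with hBdef
    have hBmeas : MeasurableSet[mG] B :=
      MeasurableSet.biUnion s.countable_toSet hAmem
    have hpd : (↑s : Set ℕ).PairwiseDisjoint A := fun i hi j hj hij =>
      hdisj i (Finset.mem_insert_of_mem hi) j (Finset.mem_insert_of_mem hj) hij
    have hBA : Disjoint B (A a) := by
      refine Set.disjoint_iUnion₂_left.mpr fun i hi => ?_
      exact hdisj i (Finset.mem_insert_of_mem hi) a (Finset.mem_insert_self a s)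
        (fun h => ha (h ▸ hi))
    have hBind : B.indicator f = ∑ i ∈ s, (A i).indicator f := by
      rw [Finset.indicator_biUnion s A hpd]
      ext ω
      simp [Finset.sum_apply]
    set h : Ω → ℝ := ∑ i ∈ s, (A i).indicator (g i) with hhdef
    have hhbdd : BddMeas mG h :=
      bddMeas_sum fun i hi =>
        bddMeas_indicator (hg i (Finset.mem_insert_of_mem hi)) (hAmem i hi)
    have hhsupp : ∀ ω, ω ∉ B → h ω = 0 := by
      intro ω hω
      simp only [hhdef, Finset.sum_apply]
      refine Finset.sum_eq_zero fun i hi => ?_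
      have : ω ∉ A i := fun hmem => hω (Set.mem_biUnion hi hmem)
      simp [Set.indicator_of_notMem this]
    have hBh : B.indicator h = h := by
      ext ω
      by_cases hω : ω ∈ B
      · simp [Set.indicator_of_mem hω]
      · simp [Set.indicator_of_notMem hω, hhsupp ω hω]
    -- constants via IVT
    obtain ⟨c, hc⟩ := existsConstT hPC hNB hM hBmeas
    obtain ⟨xa, hxa⟩ := existsConstT hPC hNB hM hamem
    -- pasting
    have hpaste := hPS B (A a) hBmeas hamem hBA c xa hc hxa
    -- induction hypothesis
    have hIH := ih A g hAmem
      (fun i hi j hj hij => hdisj i (Finset.mem_insert_of_mem hi) j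
        (Finset.mem_insert_of_mem hj) hij)
      (fun i hi => hg i (Finset.mem_insert_of_mem hi))
      (fun i hi => hTeq i (Finset.mem_insert_of_mem hi))
    -- T (c on B) = T (h on B)
    have hch : T (B.indicator fun _ => c) = T (B.indicator h) := by
      rw [hBh]
      calc T (B.indicator fun _ => c) = T (B.indicator f) := hc.symm
        _ = T (∑ i ∈ s, (A i).indicator f) := by rw [hBind]
        _ = T h := hIH
    -- replace c by h on B, keeping xa·1_{A a} outside
    have hout : Bᶜ.indicator ((A a).indicator fun _ => xa) =
        (A a).indicator fun _ => xa := by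
      ext ω
      by_cases hω : ω ∈ A a
      · have : ω ∈ Bᶜ := fun hB => (hBA.ne_of_mem hB hω) rfl
        simp [Set.indicator_of_mem this]
      · simp [Set.indicator_of_notMem hω, Set.indicator_apply]
    have hstep1 :
        T ((B.indicator fun _ => c) + (A a).indicator fun _ => xa) =
        T (h + (A a).indicator fun _ => xa) := by
      have := replaceT hQL hBmeas (bddMeas_const c) hhbdd
        (bddMeas_indicator (bddMeas_const xa) hamem) hch
      rwa [hout, hBh] at this
    -- replace xa by g a on A a, keeping h outside
    have houth : (A a)ᶜ.indicator h = h := by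
      ext ω
      by_cases hω : ω ∈ A a
      · have hωB : ω ∉ B := fun hB => (hBA.ne_of_mem hB hω) rfl
        simp [Set.indicator_apply, hω, hhsupp ω hωB]
      · simp [Set.indicator_of_mem (by exact hω : ω ∈ (A a)ᶜ)]
    have hxaga : T ((A a).indicator fun _ => xa) = T ((A a).indicator (g a)) :=
      hxa.symm.trans (hTeq a (Finset.mem_insert_self a s))
    have hstep2 :
        T (((A a).indicator fun _ => xa) + h) = T ((A a).indicator (g a) + h) := by
      have := replaceT hQL hamem (bddMeas_const xa) (hg a (Finset.mem_insert_self a s))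
        hhbdd hxaga
      rwa [houth] at this
    -- assemble
    calc T (∑ i ∈ insert a s, (A i).indicator f)
        = T (B.indicator f + (A a).indicator f) := by
          rw [Finset.sum_insert ha, hBind, add_comm]
      _ = T ((B.indicator fun _ => c) + (A a).indicator fun _ => xa) := hpaste
      _ = T (h + (A a).indicator fun _ => xa) := hstep1
      _ = T (((A a).indicator fun _ => xa) + h) := by rw [add_comm]
      _ = T ((A a).indicator (g a) + h) := hstep2
      _ = T (∑ i ∈ insert a s, (A i).indicator (g i)) := by
          rw [Finset.sum_insert ha]
end

section
/- Suppose T : L^∞(Ω,F) → ℝ satisfies T(0) = 0, (G-Mo), (G-QL), (G-PC), and (G-PS), (G-NB) at a fixed bounded F-measurable f. Then T(f·1_A + f·1_N) = T(f·1_A) for every A ∈ G and every N ∈ N_G with A ∩ N = ∅. -/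
open Filter Topology MeasureTheory

theorem stmt9 {Ω : Type*} (mF mG : MeasurableSpace Ω) (hsub : mG ≤ mF)
    (T : (Ω → ℝ) → ℝ) (hT0 : T 0 = 0) (hMo : GMo mG T) (hQL : GQL mG T) (hPC : GPC mG T)
    (f : Ω → ℝ) (hf : BddMeas mF f) (hPS : GPS mG T f) (hNB : GNB mG T f) :
    ∀ A N : Set Ω, MeasurableSet[mG] A → N ∈ NullG mG T → Disjoint A N →
      T (A.indicator f + N.indicator f) = T (A.indicator f) := by
  intro A N hA hN hdisj
  obtain ⟨hNmeas, hNnull⟩ := hN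
  set M := supNorm f with hM
  have hM0 : 0 ≤ M := Real.iSup_nonneg fun ω => abs_nonneg _
  have hbdd0 : BddMeas mG (0 : Ω → ℝ) := ⟨measurable_const, 0, by simp⟩
  have hbddc : ∀ c : ℝ, BddMeas mG (fun _ : Ω => c) := fun c =>
    ⟨measurable_const, |c|, fun ω => le_refl _⟩
  have hbddInd : ∀ c : ℝ, BddMeas mG (A.indicator fun _ => c) := fun c =>
    ⟨measurable_const.indicator hA, |c|, fun ω => by
      by_cases h : ω ∈ A <;>
        simp [Set.indicator_of_mem, Set.indicator_of_notMem, h, abs_nonneg]⟩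
  -- T vanishes on N-indicators of G-bounded functions
  have hTN : ∀ g₂ : Ω → ℝ, BddMeas mG g₂ → T (N.indicator g₂) = 0 := by
    intro g₂ hg₂
    have := hNnull 0 g₂ hbdd0 hg₂
    simpa [hT0] using this
  -- T (N.indicator f) = 0
  have hNf : T (N.indicator f) = 0 := by
    have h1 := (hNB N hNmeas).1
    have h2 := (hNB N hNmeas).2
    rw [hTN _ (hbddc (-(supNorm f)))] at h1
    rw [hTN _ (hbddc (supNorm f))] at h2
    linarith
  -- continuity of x ↦ T (A.indicator (const x))
  have hcont : Continuous (fun x : ℝ => T (A.indicator fun _ => x)) := by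
    rw [continuous_iff_seqContinuous]
    intro u a hu
    have habs : Tendsto (fun n => |u n|) atTop (𝓝 |a|) := hu.abs
    obtain ⟨C, hC⟩ := habs.bddAbove_range
    refine hPC (fun n => A.indicator fun _ => u n) (A.indicator fun _ => a)
      (fun n => hbddInd (u n)) (hbddInd a) ⟨C, fun n ω => ?_⟩ fun ω => ?_
    · by_cases h : ω ∈ A
      · simpa [Set.indicator_of_mem, h] using hC ⟨n, rfl⟩
      · have : (0:ℝ) ≤ C := le_trans (abs_nonneg _) (hC ⟨n, rfl⟩)
        simpa [Set.indicator_of_notMem, h] using this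
    · by_cases h : ω ∈ A
      · simpa [Set.indicator_of_mem, h] using hu
      · simp [Set.indicator_of_notMem, h]
  -- intermediate value: find constant x with T(1_A f) = T(1_A x)
  have hmem : T (A.indicator f) ∈
      Set.Icc (T (A.indicator fun _ => -M)) (T (A.indicator fun _ => M)) :=
    ⟨(hNB A hA).1, (hNB A hA).2⟩
  obtain ⟨x, -, hx⟩ := intermediate_value_Icc (neg_le_self hM0) hcont.continuousOn hmem
  -- pasting
  have hN0 : T (N.indicator f) = T (N.indicator fun _ => (0:ℝ)) := by
    rw [hNf, hTN _ (hbddc 0)]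
  have hpaste := hPS A N hA hNmeas hdisj x 0 hx.symm hN0
  rw [hpaste]
  have := hNnull (A.indicator fun _ => x) (fun _ => (0:ℝ)) (hbddInd x) (hbddc 0)
  rw [this]; exact hx
end

section
/- Suppose T : L^∞(Ω,F) → ℝ satisfies T(0) = 0, (G-Mo), (G-QL), (G-PC), and (G-PS), (G-NB) hold at a fixed bounded F-measurable f. Let π ⊆ G be a finite partition of Ω and σ(π) the σ-algebra it generates. Then there exists a simple σ(π)-measurable function ĝ such that T(f·1_A) = T(ĝ·1_A) for every A ∈ σ(π), and ĝ takes values in [−‖f‖_∞, ‖f‖_∞]. -/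
open Filter Topology MeasureTheory

lemma bddMeas_indicator_const {Ω : Type*} (mG : MeasurableSpace Ω) {A : Set Ω}
    (hA : MeasurableSet[mG] A) (c : ℝ) : BddMeas mG (A.indicator fun _ => c) := by
  refine ⟨measurable_const.indicator hA, |c|, fun ω => ?_⟩
  by_cases h : ω ∈ A <;> simp [Set.indicator_of_mem, Set.indicator_of_notMem, h]

lemma cont_phi {Ω : Type*} (mG : MeasurableSpace Ω) (T : (Ω → ℝ) → ℝ) (hPC : GPC mG T)
    {A : Set Ω} (hA : MeasurableSet[mG] A) :
    Continuous fun x : ℝ => T (A.indicator fun _ => x) := by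
  rw [continuous_iff_seqContinuous]
  intro u a hu
  obtain ⟨C, hC⟩ : ∃ C : ℝ, ∀ n, |u n| ≤ C := by
    obtain ⟨C, hC⟩ := (hu.abs).bddAbove_range
    exact ⟨C, fun n => hC (Set.mem_range_self n)⟩
  refine hPC (fun n => A.indicator fun _ => u n) (A.indicator fun _ => a)
    (fun n => bddMeas_indicator_const mG hA (u n)) (bddMeas_indicator_const mG hA a)
    ⟨C, fun n ω => ?_⟩ (fun ω => ?_)
  · by_cases h : ω ∈ A <;>
      simp [Set.indicator_of_mem, Set.indicator_of_notMem, h, hC n,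
        (abs_nonneg (u n)).trans (hC n)]
  · by_cases h : ω ∈ A <;>
      simp [Set.indicator_of_mem, Set.indicator_of_notMem, h, hu, tendsto_const_nhds]

lemma replace_lemma {Ω : Type*} (mG : MeasurableSpace Ω) (T : (Ω → ℝ) → ℝ) (hQL : GQL mG T)
    {A : Set Ω} (hA : MeasurableSet[mG] A) {g₁ g₂ : Ω → ℝ}
    (h₁ : BddMeas mG g₁) (h₂ : BddMeas mG g₂)
    (heq : T (A.indicator g₁) = T (A.indicator g₂)) {g : Ω → ℝ} (hg : BddMeas mG g) :
    T (A.indicator g₁ + Aᶜ.indicator g) = T (A.indicator g₂ + Aᶜ.indicator g) := by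
  have h0 : BddMeas mG (fun _ => (0:ℝ)) := ⟨measurable_const, 0, by simp⟩
  have e : ∀ h : Ω → ℝ, A.indicator h + Aᶜ.indicator (fun _ => (0:ℝ)) = A.indicator h := by
    intro h; funext ω; simp
  refine le_antisymm
    (hQL g₁ g₂ h₁ h₂ A hA ⟨fun _ => 0, h0, ?_⟩ g hg)
    (hQL g₂ g₁ h₂ h₁ A hA ⟨fun _ => 0, h0, ?_⟩ g hg)
  · rw [e, e]; exact heq.le
  · rw [e, e]; exact heq.ge

lemma exists_const' {Ω : Type*} (mG : MeasurableSpace Ω) (T : (Ω → ℝ) → ℝ) (hPC : GPC mG T)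
    (f : Ω → ℝ) (hNB : GNB mG T f) {A : Set Ω} (hA : MeasurableSet[mG] A) :
    ∃ x : ℝ, |x| ≤ supNorm f ∧ T (A.indicator f) = T (A.indicator fun _ => x) := by
  have hM : (0:ℝ) ≤ supNorm f := Real.iSup_nonneg fun ω => abs_nonneg _
  have hle : -(supNorm f) ≤ supNorm f := by linarith
  have hivt := intermediate_value_Icc hle (cont_phi mG T hPC hA).continuousOn
  obtain ⟨hlo, hhi⟩ := hNB A hA
  obtain ⟨x, hx, hval⟩ := hivt ⟨hlo, hhi⟩
  exact ⟨x, abs_le.mpr ⟨hx.1, hx.2⟩, hval.symm⟩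

theorem stmt11 {Ω : Type*} (mF mG : MeasurableSpace Ω) (hsub : mG ≤ mF)
    (T : (Ω → ℝ) → ℝ) (hT0 : T 0 = 0) (hMo : GMo mG T) (hQL : GQL mG T) (hPC : GPC mG T)
    (f : Ω → ℝ) (hf : BddMeas mF f) (hPS : GPS mG T f) (hNB : GNB mG T f)
    (s : Finset ℕ) (A : ℕ → Set Ω)
    (hmeas : ∀ i ∈ s, MeasurableSet[mG] (A i))
    (hdisj : ∀ i ∈ s, ∀ j ∈ s, i ≠ j → Disjoint (A i) (A j))
    (hcov : (⋃ i ∈ s, A i) = Set.univ) :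
    ∃ gh : Ω → ℝ,
      Measurable[MeasurableSpace.generateFrom {B : Set Ω | ∃ i ∈ s, B = A i}] gh ∧
      (Set.range gh).Finite ∧
      (∀ ω, |gh ω| ≤ supNorm f) ∧
      ∀ B : Set Ω,
        MeasurableSet[MeasurableSpace.generateFrom {B : Set Ω | ∃ i ∈ s, B = A i}] B →
        T (B.indicator f) = T (B.indicator gh) := by
  classical
  set mGen := MeasurableSpace.generateFrom {B : Set Ω | ∃ i ∈ s, B = A i} with hmGen
  have hGenLe : mGen ≤ mG := MeasurableSpace.generateFrom_le (fun B hB => by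
    obtain ⟨i, hi, rfl⟩ := hB; exact hmeas i hi)
  have hM : (0:ℝ) ≤ supNorm f := Real.iSup_nonneg fun ω => abs_nonneg _
  have hx : ∀ i : ℕ, ∃ x : ℝ, |x| ≤ supNorm f ∧
      (i ∈ s → T ((A i).indicator f) = T ((A i).indicator fun _ => x)) := by
    intro i
    by_cases hi : i ∈ s
    · obtain ⟨x, h1, h2⟩ := exists_const' mG T hPC f hNB (hmeas i hi)
      exact ⟨x, h1, fun _ => h2⟩
    · exact ⟨0, by simpa using hM, fun h => absurd h hi⟩
  choose x hxb hxeq using hx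
  set gh : Ω → ℝ := fun ω => ∑ i ∈ s, (A i).indicator (fun _ => x i) ω with hgh
  have hval : ∀ i ∈ s, ∀ ω ∈ A i, gh ω = x i := by
    intro i hi ω hω
    have h1 : ∑ j ∈ s, (A j).indicator (fun _ => x j) ω
        = (A i).indicator (fun _ => x i) ω := by
      refine Finset.sum_eq_single_of_mem i hi (fun j hj hne => ?_)
      have hdj : ω ∉ A j :=
        Set.disjoint_left.mp (hdisj i hi j hj (fun h => hne (h ▸ rfl))) hω
      simp [Set.indicator_of_notMem hdj]
    calc gh ω = ∑ j ∈ s, (A j).indicator (fun _ => x j) ω := rfl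
      _ = (A i).indicator (fun _ => x i) ω := h1
      _ = x i := Set.indicator_of_mem hω _
  have hmeasGen : Measurable[mGen] gh :=
    Finset.measurable_sum s (fun i hi =>
      measurable_const.indicator (MeasurableSpace.measurableSet_generateFrom ⟨i, hi, rfl⟩))
  have hcovmem : ∀ ω : Ω, ∃ i ∈ s, ω ∈ A i := by
    intro ω
    have : ω ∈ ⋃ i ∈ s, A i := hcov ▸ Set.mem_univ ω
    obtain ⟨i, hi, h⟩ := Set.mem_iUnion₂.mp this
    exact ⟨i, hi, h⟩
  have hrange : (Set.range gh).Finite := by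
    apply Set.Finite.subset (s.finite_toSet.image x)
    rintro y ⟨ω, rfl⟩
    obtain ⟨i, hi, hωi⟩ := hcovmem ω
    exact ⟨i, hi, (hval i hi ω hωi).symm⟩
  have hbound : ∀ ω, |gh ω| ≤ supNorm f := by
    intro ω
    obtain ⟨i, hi, hωi⟩ := hcovmem ω
    rw [hval i hi ω hωi]; exact hxb i
  have hghBdd : BddMeas mG gh := ⟨hmeasGen.mono hGenLe le_rfl, supNorm f, hbound⟩
  have claim : ∀ t : Finset ℕ, t ⊆ s →
      T ((⋃ i ∈ t, A i).indicator f) = T ((⋃ i ∈ t, A i).indicator gh) := by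
    intro t
    induction t using Finset.induction_on with
    | empty => intro _; simp
    | @insert j t hj ih =>
      intro hins
      have hjs : j ∈ s := hins (Finset.mem_insert_self j t)
      have hts : t ⊆ s := fun i hi => hins (Finset.mem_insert_of_mem hi)
      set B' : Set Ω := ⋃ i ∈ t, A i with hB'
      have hB'meas : MeasurableSet[mG] B' :=
        t.measurableSet_biUnion (fun i hi => hmeas i (hts hi))
      have hdisjB : Disjoint (A j) B' := by
        rw [hB', Set.disjoint_iUnion₂_right]
        intro i hi
        exact hdisj j hjs i (hts hi) (fun h => hj (h ▸ hi))
      have hunion : (⋃ i ∈ insert j t, A i) = A j ∪ B' := Finset.set_biUnion_insert j t A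
      obtain ⟨c, hcb, hc⟩ := exists_const' mG T hPC f hNB hB'meas
      have hps := hPS (A j) B' (hmeas j hjs) hB'meas hdisjB (x j) c (hxeq j hjs) hc
      have hcBdd : BddMeas mG (fun _ : Ω => c) := ⟨measurable_const, |c|, fun ω => le_rfl⟩
      have hrep := replace_lemma mG T hQL hB'meas hcBdd hghBdd
        (hc.symm.trans (ih hts)) (bddMeas_indicator_const mG (hmeas j hjs) (x j))
      have hsub' : A j ⊆ B'ᶜ := Set.subset_compl_iff_disjoint_right.mpr hdisjB
      have hBc : B'ᶜ.indicator ((A j).indicator fun _ => x j)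
          = (A j).indicator fun _ => x j := by
        rw [Set.indicator_indicator, Set.inter_eq_self_of_subset_right hsub']
      rw [hBc] at hrep
      have hgA : (A j).indicator (fun _ => x j) = (A j).indicator gh :=
        Set.indicator_congr (fun ω hω => (hval j hjs ω hω).symm)
      have e1 : (A j ∪ B').indicator f = (A j).indicator f + B'.indicator f := by
        rw [Set.indicator_union_of_disjoint hdisjB]; rfl
      have e2 : (A j ∪ B').indicator gh = (A j).indicator gh + B'.indicator gh := by
        rw [Set.indicator_union_of_disjoint hdisjB]; rfl
      rw [hunion, e1, e2]
      calc T ((A j).indicator f + B'.indicator f)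
          = T ((A j).indicator (fun _ => x j) + B'.indicator fun _ => c) := hps
        _ = T (B'.indicator (fun _ => c) + (A j).indicator fun _ => x j) := by
            rw [add_comm]
        _ = T (B'.indicator gh + (A j).indicator fun _ => x j) := hrep
        _ = T ((A j).indicator gh + B'.indicator gh) := by rw [hgA, add_comm]
  have hchar : ∀ B : Set Ω, MeasurableSet[mGen] B →
      ∃ t : Finset ℕ, t ⊆ s ∧ B = ⋃ i ∈ t, A i := by
    let m' : MeasurableSpace Ω :=
    { MeasurableSet' := fun B => ∃ t : Finset ℕ, t ⊆ s ∧ B = ⋃ i ∈ t, A i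
      measurableSet_empty := ⟨∅, Finset.empty_subset s, by simp⟩
      measurableSet_compl := by
        rintro B ⟨t, hts, rfl⟩
        refine ⟨s \ t, Finset.sdiff_subset, ?_⟩
        ext ω
        simp only [Set.mem_compl_iff, Set.mem_iUnion, Finset.mem_sdiff, exists_prop,
          not_exists, not_and]
        constructor
        · intro h
          obtain ⟨i, hi, hωi⟩ := hcovmem ω
          exact ⟨i, ⟨hi, fun hit => h i hit hωi⟩, hωi⟩
        · rintro ⟨i, ⟨his, hit⟩, hωi⟩ j hjt hωj
          exact (Set.disjoint_left.mp
            (hdisj i his j (hts hjt) (fun h => hit (h ▸ hjt))) hωi) hωj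
      measurableSet_iUnion := by
        intro g hg
        choose t ht hEq using hg
        refine ⟨s.filter (fun i => ∃ n, i ∈ t n), Finset.filter_subset _ _, ?_⟩
        ext ω
        simp only [Set.mem_iUnion, Finset.mem_filter]
        constructor
        · rintro ⟨n, hn⟩
          rw [hEq n] at hn
          obtain ⟨i, hi, hωi⟩ := Set.mem_iUnion₂.mp hn
          exact ⟨i, ⟨ht n hi, n, hi⟩, hωi⟩
        · rintro ⟨i, ⟨his, n, hin⟩, hωi⟩
          refine ⟨n, ?_⟩
          rw [hEq n]
          exact Set.mem_iUnion₂.mpr ⟨i, hin, hωi⟩ }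
    intro B hB
    have hle : mGen ≤ m' := MeasurableSpace.generateFrom_le (fun C hC => by
      obtain ⟨i, hi, rfl⟩ := hC
      exact ⟨{i}, Finset.singleton_subset_iff.mpr hi, by simp⟩)
    exact hle B hB
  refine ⟨gh, hmeasGen, hrange, hbound, ?_⟩
  intro B hB
  obtain ⟨t, hts, rfl⟩ := hchar B hB
  exact claim t hts
end

section
/- Let U : L^∞(Ω,F) → ℝ satisfy (G-PC) and monotonicity on L^∞(Ω,G) (pointwise g₁ ≤ g₂ implies U(g₁) ≤ U(g₂)). Let Φ̂ : S(G) → ℝ be U-order preserving on the simple G-measurable functions S(G), with x ↦ Φ̂(x·1_Ω) continuous on ℝ. Then Φ̂ extends to a functional on all of L^∞(Ω,G) which satisfies (G-PC) and is U-order preserving on L^∞(Ω,G). -/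
open Filter Topology MeasureTheory

/-- Simple (finitely-valued) `mG`-measurable functions. -/
def SimpleG {Ω : Type*} (mG : MeasurableSpace Ω) (g : Ω → ℝ) : Prop :=
  Measurable[mG] g ∧ (Set.range g).Finite

/-! Every bounded `g` has a certainty equivalent `x`, i.e. `U x = U g`, by the intermediate value
theorem for the continuous monotone map `x ↦ U x`; set `Φ g := Φh x`. On constants `Φh` and `U`
induce the same order, so this is well defined, agrees with `Φh` on simple functions and is
`U`-order preserving. For (G-PC), the certainty equivalents of a bounded sequence stay in a compact
interval, and any limit point of them is a certainty equivalent of the limit, because `U` is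
continuous along the sequence; continuity of `x ↦ Φh x` then gives convergence of `Φ`. -/

theorem tendsto_comp_of_tendsto_comp_of_isCompact {X Y Z : Type*} [TopologicalSpace X]
    [FirstCountableTopology X] [TopologicalSpace Y] [T2Space Y] [TopologicalSpace Z]
    {c : X → Y} {φ : X → Z} (hc : Continuous c) (hφ : Continuous φ)
    (hfib : ∀ x y, c x = c y → φ x = φ y) {K : Set X} (hK : IsCompact K)
    {u : ℕ → X} (hu : ∀ n, u n ∈ K) {y : X} (hcu : Tendsto (c ∘ u) atTop (𝓝 (c y))) :
    Tendsto (φ ∘ u) atTop (𝓝 (φ y)) := by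
  refine tendsto_of_subseq_tendsto fun ns hns => ?_
  obtain ⟨z, -, ms, hms_mono, hms⟩ := hK.tendsto_subseq fun k => hu (ns k)
  have hcz : c z = c y :=
    tendsto_nhds_unique ((hc.tendsto z).comp hms)
      (hcu.comp (hns.comp hms_mono.tendsto_atTop))
  exact ⟨ms, hfib z y hcz ▸ (hφ.tendsto z).comp hms⟩

section Extension

variable {Ω : Type*} {mG : MeasurableSpace Ω}

theorem SimpleG.const (mG : MeasurableSpace Ω) (x : ℝ) : SimpleG mG fun _ : Ω => x :=
  ⟨measurable_const, (Set.finite_singleton x).subset Set.range_const_subset⟩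

theorem BddMeas.const (mG : MeasurableSpace Ω) (x : ℝ) : BddMeas mG fun _ : Ω => x :=
  ⟨measurable_const, |x|, fun _ => le_rfl⟩

theorem SimpleG.bddMeas {g : Ω → ℝ} (hg : SimpleG mG g) : BddMeas mG g := by
  obtain ⟨C, hC⟩ := (hg.2.image abs).bddAbove
  exact ⟨hg.1, C, fun ω => hC ⟨g ω, ⟨ω, rfl⟩, rfl⟩⟩

theorem BddMeas.exists_nonneg_bound {g : Ω → ℝ} (hg : BddMeas mG g) :
    ∃ M, 0 ≤ M ∧ ∀ ω, |g ω| ≤ M := by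
  obtain ⟨C, hC⟩ := hg.2
  exact ⟨max C 0, le_max_right _ _, fun ω => (hC ω).trans (le_max_left _ _)⟩

theorem GPC.continuous_const {T : (Ω → ℝ) → ℝ} (hT : GPC mG T) :
    Continuous fun x : ℝ => T fun _ => x := by
  refine continuous_iff_seqContinuous.mpr fun xn x hx => ?_
  obtain ⟨C, hC⟩ := isBounded_iff_forall_norm_le.mp (Metric.isBounded_range_of_tendsto xn hx)
  exact hT (fun n _ => xn n) (fun _ => x) (fun n => .const mG _) (.const mG x)
    ⟨C, fun n _ => hC _ ⟨n, rfl⟩⟩ fun _ => hx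

/-- A constant `x` with `T x = T g` is a *certainty equivalent* of `g`. -/
theorem exists_certaintyEquiv {T : (Ω → ℝ) → ℝ} (hT : GPC mG T)
    (hmono : ∀ g₁ g₂ : Ω → ℝ, BddMeas mG g₁ → BddMeas mG g₂ →
      (∀ ω, g₁ ω ≤ g₂ ω) → T g₁ ≤ T g₂)
    {g : Ω → ℝ} (hg : BddMeas mG g) {M : ℝ} (hM : 0 ≤ M) (hgM : ∀ ω, |g ω| ≤ M) :
    ∃ x ∈ Set.Icc (-M) M, T (fun _ => x) = T g :=
  intermediate_value_Icc (by linarith) hT.continuous_const.continuousOn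
    ⟨hmono _ _ (.const mG _) hg fun ω => (abs_le.mp (hgM ω)).1,
      hmono _ _ hg (.const mG _) fun ω => (abs_le.mp (hgM ω)).2⟩

open Classical in
/-- `Φh` evaluated at a certainty equivalent; the junk value `0` is taken only where none
exists, which never happens for bounded measurable `g`. -/
noncomputable def extendByCertaintyEquiv (U Φh : (Ω → ℝ) → ℝ) (g : Ω → ℝ) : ℝ :=
  if h : ∃ x : ℝ, U (fun _ => x) = U g then Φh fun _ => h.choose else 0

variable {U Φh : (Ω → ℝ) → ℝ}

theorem extendByCertaintyEquiv_eq
    (hfib : ∀ x y : ℝ, U (fun _ => x) = U (fun _ => y) → Φh (fun _ => x) = Φh (fun _ => y))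
    {g : Ω → ℝ} {x : ℝ} (hx : U (fun _ => x) = U g) :
    extendByCertaintyEquiv U Φh g = Φh fun _ => x := by
  have h : ∃ y : ℝ, U (fun _ => y) = U g := ⟨x, hx⟩
  rw [extendByCertaintyEquiv, dif_pos h]
  exact hfib _ _ (h.choose_spec.trans hx.symm)

theorem GPC.extendByCertaintyEquiv (hU : GPC mG U)
    (hmono : ∀ g₁ g₂ : Ω → ℝ, BddMeas mG g₁ → BddMeas mG g₂ →
      (∀ ω, g₁ ω ≤ g₂ ω) → U g₁ ≤ U g₂)
    (hfib : ∀ x y : ℝ, U (fun _ => x) = U (fun _ => y) → Φh (fun _ => x) = Φh (fun _ => y))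
    (hcont : Continuous fun x : ℝ => Φh (fun _ => x)) :
    GPC mG (extendByCertaintyEquiv U Φh) := by
  intro gn g hgn hg ⟨C, hC⟩ hlim
  obtain ⟨Cg, hCg₀, hCg⟩ := hg.exists_nonneg_bound
  set M := max C Cg
  have hM : 0 ≤ M := le_max_of_le_right hCg₀
  choose yn hyn_mem hyn using fun n =>
    exists_certaintyEquiv hU hmono (hgn n) hM fun ω => (hC n ω).trans (le_max_left _ _)
  obtain ⟨y, -, hy⟩ :=
    exists_certaintyEquiv hU hmono hg hM fun ω => (hCg ω).trans (le_max_right _ _)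
  have hUlim : Tendsto (fun n => U fun _ => yn n) atTop (𝓝 (U fun _ => y)) := by
    simpa only [hyn, hy] using hU gn g hgn hg ⟨C, hC⟩ hlim
  simpa only [extendByCertaintyEquiv_eq hfib (hyn _), extendByCertaintyEquiv_eq hfib hy,
    Function.comp_def] using
    tendsto_comp_of_tendsto_comp_of_isCompact hU.continuous_const hcont hfib isCompact_Icc
      hyn_mem hUlim

end Extension

theorem stmt13_general {Ω : Type*} (mG : MeasurableSpace Ω)
    (U : (Ω → ℝ) → ℝ) (hUPC : GPC mG U)
    (hUmono : ∀ g₁ g₂ : Ω → ℝ, BddMeas mG g₁ → BddMeas mG g₂ →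
      (∀ ω, g₁ ω ≤ g₂ ω) → U g₁ ≤ U g₂)
    (Φh : (Ω → ℝ) → ℝ)
    (hop : ∀ g₁ g₂ : Ω → ℝ, SimpleG mG g₁ → SimpleG mG g₂ →
      (Φh g₁ ≤ Φh g₂ ↔ U g₁ ≤ U g₂))
    (hcont : Continuous fun x : ℝ => Φh (fun _ => x)) :
    ∃ Φ : (Ω → ℝ) → ℝ,
      (∀ g : Ω → ℝ, SimpleG mG g → Φ g = Φh g) ∧
      GPC mG Φ ∧
      (∀ g₁ g₂ : Ω → ℝ, BddMeas mG g₁ → BddMeas mG g₂ →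
        (Φ g₁ ≤ Φ g₂ ↔ U g₁ ≤ U g₂)) := by
  have hfib : ∀ x y : ℝ, U (fun _ => x) = U (fun _ => y) → Φh (fun _ => x) = Φh (fun _ => y) :=
    fun x y h => le_antisymm ((hop _ _ (.const mG x) (.const mG y)).2 h.le)
      ((hop _ _ (.const mG y) (.const mG x)).2 h.ge)
  have hce : ∀ g, BddMeas mG g → ∃ x : ℝ, U (fun _ => x) = U g := fun g hg =>
    let ⟨_, hM, hgM⟩ := hg.exists_nonneg_bound
    let ⟨x, _, hx⟩ := exists_certaintyEquiv hUPC hUmono hg hM hgM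
    ⟨x, hx⟩
  refine ⟨extendByCertaintyEquiv U Φh, fun g hg => ?_, hUPC.extendByCertaintyEquiv hUmono hfib hcont,
    fun g₁ g₂ hg₁ hg₂ => ?_⟩
  · obtain ⟨x, hx⟩ := hce g hg.bddMeas
    rw [extendByCertaintyEquiv_eq hfib hx]
    exact le_antisymm ((hop _ _ (.const mG x) hg).2 hx.le) ((hop _ _ hg (.const mG x)).2 hx.ge)
  · obtain ⟨x₁, hx₁⟩ := hce g₁ hg₁
    obtain ⟨x₂, hx₂⟩ := hce g₂ hg₂
    rw [extendByCertaintyEquiv_eq hfib hx₁, extendByCertaintyEquiv_eq hfib hx₂,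
      hop _ _ (.const mG x₁) (.const mG x₂), hx₁, hx₂]

theorem stmt13 {Ω : Type*} (mF mG : MeasurableSpace Ω) (hsub : mG ≤ mF)
    (U : (Ω → ℝ) → ℝ) (hUPC : GPC mG U)
    (hUmono : ∀ g₁ g₂ : Ω → ℝ, BddMeas mG g₁ → BddMeas mG g₂ →
      (∀ ω, g₁ ω ≤ g₂ ω) → U g₁ ≤ U g₂)
    (Φh : (Ω → ℝ) → ℝ)
    (hop : ∀ g₁ g₂ : Ω → ℝ, SimpleG mG g₁ → SimpleG mG g₂ →
      (Φh g₁ ≤ Φh g₂ ↔ U g₁ ≤ U g₂))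
    (hcont : Continuous fun x : ℝ => Φh (fun _ => x)) :
    ∃ Φ : (Ω → ℝ) → ℝ,
      (∀ g : Ω → ℝ, SimpleG mG g → Φ g = Φh g) ∧
      GPC mG Φ ∧
      (∀ g₁ g₂ : Ω → ℝ, BddMeas mG g₁ → BddMeas mG g₂ →
        (Φ g₁ ≤ Φ g₂ ↔ U g₁ ≤ U g₂)) :=
  stmt13_general mG U hUPC hUmono Φh hop hcont
end

section
/- Let ρ_G : L^∞(Ω,F,ℙ) → L^∞(Ω,G,ℙ) be a conditional convex risk measure with ρ_G(0) = 0 a.s. Then for every A ∈ G and X ∈ L^∞(Ω,F,ℙ), ρ_G(X·1_A) = ρ_G(X)·1_A ℙ-a.s. (locality), and moreover ρ_G(X₁·1_A + X₂·1_{Ω∖A}) = ρ_G(X₁)·1_A + ρ_G(X₂)·1_{Ω∖A} a.s. for all X₁, X₂ (pasting). -/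
open Filter Topology MeasureTheory

/-- `ρ` is (given by representatives of) a conditional convex risk measure on
`L^∞(Ω,F,ℙ)` with values in `L^∞(Ω,G,ℙ)`, with `ρ(0) = 0` a.s. -/
structure IsCondConvexRM {Ω : Type*} (mF mG : MeasurableSpace Ω)
    (μ : @MeasureTheory.Measure Ω mF) (ρ : (Ω → ℝ) → Ω → ℝ) : Prop where
  map_bdd : ∀ X : Ω → ℝ, BddMeas mF X → BddMeas mG (ρ X)
  congr_ae : ∀ X₁ X₂ : Ω → ℝ, BddMeas mF X₁ → BddMeas mF X₂ →
    X₁ =ᵐ[μ] X₂ → ρ X₁ =ᵐ[μ] ρ X₂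
  antimono : ∀ X Y : Ω → ℝ, BddMeas mF X → BddMeas mF Y →
    Y ≤ᵐ[μ] X → ρ X ≤ᵐ[μ] ρ Y
  cash : ∀ X : Ω → ℝ, BddMeas mF X → ∀ c : Ω → ℝ, BddMeas mG c →
    ρ (X + c) =ᵐ[μ] ρ X - c
  convex : ∀ X₁ X₂ : Ω → ℝ, BddMeas mF X₁ → BddMeas mF X₂ →
    ∀ Λ : Ω → ℝ, BddMeas mG Λ → (∀ ω, 0 ≤ Λ ω ∧ Λ ω ≤ 1) →
    ρ (Λ * X₁ + (1 - Λ) * X₂) ≤ᵐ[μ] Λ * ρ X₁ + (1 - Λ) * ρ X₂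
  zero : ρ 0 =ᵐ[μ] 0

theorem stmt16 {Ω : Type*} (mF mG : MeasurableSpace Ω) (hsub : mG ≤ mF)
    (μ : @MeasureTheory.Measure Ω mF) [IsProbabilityMeasure μ]
    (ρ : (Ω → ℝ) → Ω → ℝ) (hρ : IsCondConvexRM mF mG μ ρ) :
    (∀ A : Set Ω, MeasurableSet[mG] A → ∀ X : Ω → ℝ, BddMeas mF X →
      ρ (A.indicator X) =ᵐ[μ] A.indicator (ρ X)) ∧
    (∀ A : Set Ω, MeasurableSet[mG] A → ∀ X₁ X₂ : Ω → ℝ, BddMeas mF X₁ → BddMeas mF X₂ →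
      ρ (A.indicator X₁ + Aᶜ.indicator X₂) =ᵐ[μ]
        A.indicator (ρ X₁) + Aᶜ.indicator (ρ X₂)) := by
  have bdd0 : BddMeas mF (0 : Ω → ℝ) := ⟨measurable_const, 0, fun ω => by simp⟩
  -- indicators preserve boundedness/measurability
  have hind : ∀ (A : Set Ω), MeasurableSet[mG] A → ∀ X : Ω → ℝ, BddMeas mF X →
      BddMeas mF (A.indicator X) := by
    rintro A hA X ⟨hXm, C, hC⟩
    refine ⟨hXm.indicator (hsub A hA), C ⊔ 0, fun ω => ?_⟩
    by_cases h : ω ∈ A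
    · simp only [Set.indicator_of_mem h]
      exact (hC ω).trans le_sup_left
    · simp [Set.indicator_of_notMem h]
  have hchi : ∀ (A : Set Ω), MeasurableSet[mG] A →
      BddMeas mG (A.indicator (fun _ => (1:ℝ))) := by
    intro A hA
    refine ⟨measurable_const.indicator hA, 1, fun ω => ?_⟩
    by_cases h : ω ∈ A <;> simp [Set.indicator_of_mem, Set.indicator_of_notMem, h]
  have hchib : ∀ (A : Set Ω), ∀ ω,
      0 ≤ A.indicator (fun _ => (1:ℝ)) ω ∧ A.indicator (fun _ => (1:ℝ)) ω ≤ 1 := by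
    intro A ω
    by_cases h : ω ∈ A <;> simp [Set.indicator_of_mem, Set.indicator_of_notMem, h]
  -- LOCALITY
  have loc : ∀ A : Set Ω, MeasurableSet[mG] A → ∀ X : Ω → ℝ, BddMeas mF X →
      ρ (A.indicator X) =ᵐ[μ] A.indicator (ρ X) := by
    intro A hA X hX
    set χ : Ω → ℝ := A.indicator (fun _ => (1:ℝ)) with hχdef
    set χ' : Ω → ℝ := Aᶜ.indicator (fun _ => (1:ℝ)) with hχ'def
    -- h1 : ρ (1_A X) ≤ χ ρ(X) + (1-χ) ρ(0) a.e.
    have h1 := hρ.convex X 0 hX bdd0 χ (hchi A hA) (hchib A)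
    have e1 : χ * X + (1 - χ) * 0 = A.indicator X := by
      funext ω
      by_cases h : ω ∈ A <;>
        simp [hχdef, Set.indicator_of_mem, Set.indicator_of_notMem, h]
    rw [e1] at h1
    -- h2 : ρ X ≤ χ ρ(1_A X) + (1-χ) ρ X a.e.
    have h2 := hρ.convex (A.indicator X) X (hind A hA X hX) hX χ (hchi A hA) (hchib A)
    have e2 : χ * A.indicator X + (1 - χ) * X = X := by
      funext ω
      by_cases h : ω ∈ A <;>
        simp [hχdef, Set.indicator_of_mem, Set.indicator_of_notMem, h]
    rw [e2] at h2
    -- h3 : ρ 0 ≤ χ' ρ(1_A X) + (1-χ') ρ 0 a.e.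
    have h3 := hρ.convex (A.indicator X) 0 (hind A hA X hX) bdd0 χ' (hchi Aᶜ hA.compl)
      (hchib Aᶜ)
    have e3 : χ' * A.indicator X + (1 - χ') * 0 = 0 := by
      funext ω
      by_cases h : ω ∈ A <;>
        simp [hχ'def, Set.indicator_of_mem, Set.indicator_of_notMem, h]
    rw [e3] at h3
    filter_upwards [h1, h2, h3, hρ.zero] with ω h1ω h2ω h3ω hzω
    simp only [Pi.add_apply, Pi.mul_apply, Pi.sub_apply, Pi.one_apply, Pi.zero_apply,
      hzω] at h1ω h2ω h3ω
    by_cases h : ω ∈ A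
    · have hχω : χ ω = 1 := Set.indicator_of_mem h _
      have hχ'ω : χ' ω = 0 := Set.indicator_of_notMem (by simp [h]) _
      rw [Set.indicator_of_mem h]
      rw [hχω] at h1ω h2ω
      simp at h1ω h2ω
      linarith
    · have hχω : χ ω = 0 := Set.indicator_of_notMem h _
      have hχ'ω : χ' ω = 1 := Set.indicator_of_mem (by simp [h]) _
      rw [Set.indicator_of_notMem h]
      rw [hχω] at h1ω; rw [hχ'ω] at h3ω
      simp at h1ω h3ω
      linarith
  refine ⟨loc, ?_⟩
  -- PASTING
  intro A hA X₁ X₂ hX₁ hX₂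
  set Y : Ω → ℝ := A.indicator X₁ + Aᶜ.indicator X₂ with hYdef
  have hY : BddMeas mF Y := by
    obtain ⟨m1, C1, hC1⟩ := hind A hA X₁ hX₁
    obtain ⟨m2, C2, hC2⟩ := hind Aᶜ hA.compl X₂ hX₂
    exact ⟨m1.add m2, C1 + C2, fun ω => (abs_add_le _ _).trans (add_le_add (hC1 ω) (hC2 ω))⟩
  have eY1 : A.indicator Y = A.indicator X₁ := by
    funext ω
    by_cases h : ω ∈ A <;>
      simp [hYdef, Set.indicator_of_mem, Set.indicator_of_notMem, h]
  have eY2 : Aᶜ.indicator Y = Aᶜ.indicator X₂ := by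
    funext ω
    by_cases h : ω ∈ A <;>
      simp [hYdef, Set.indicator_of_mem, Set.indicator_of_notMem, h]
  have l1 : A.indicator (ρ Y) =ᵐ[μ] A.indicator (ρ X₁) :=
    (loc A hA Y hY).symm.trans (by rw [eY1]; exact loc A hA X₁ hX₁)
  have l2 : Aᶜ.indicator (ρ Y) =ᵐ[μ] Aᶜ.indicator (ρ X₂) :=
    (loc Aᶜ hA.compl Y hY).symm.trans (by rw [eY2]; exact loc Aᶜ hA.compl X₂ hX₂)
  filter_upwards [l1, l2] with ω h1ω h2ω
  have : ρ Y ω = A.indicator (ρ Y) ω + Aᶜ.indicator (ρ Y) ω := by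
    by_cases h : ω ∈ A <;>
      simp [Set.indicator_of_mem, Set.indicator_of_notMem, h]
  rw [Pi.add_apply, ← h1ω, ← h2ω, ← this]
end

section
/- Suppose T : L^∞(Ω,F) → ℝ satisfies T(0)=0, (G-Mo), (G-QL), (G-PC), and (G-PS), (G-NB) at a fixed f, and that Π(G) ≠ ∅ (there exists a finite G-measurable partition of Ω with at least three cells A satisfying T(1_A) > 0). Then the set T_G := {g bounded G-measurable : T(f·1_A) ≥ T(g·1_A) for all A ∈ G} is upward directed: if g₁, g₂ ∈ T_G then the pointwise maximum g₁ ∨ g₂ ∈ T_G. -/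
open Filter Topology MeasureTheory

section Stmt17Aux
variable {Ω : Type*}

lemma stmt17_bddMeas_const (mG : MeasurableSpace Ω) (c : ℝ) :
    BddMeas mG (fun _ => c) := ⟨measurable_const, |c|, fun _ => le_rfl⟩

lemma stmt17_bddMeas_indicator {mG : MeasurableSpace Ω} {g : Ω → ℝ} {A : Set Ω}
    (hg : BddMeas mG g) (hA : MeasurableSet[mG] A) : BddMeas mG (A.indicator g) := by
  obtain ⟨hm, C, hC⟩ := hg
  refine ⟨hm.indicator hA, max C 0, fun ω => ?_⟩
  by_cases h : ω ∈ A
  · rw [Set.indicator_of_mem h]; exact (hC ω).trans (le_max_left _ _)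
  · simp [Set.indicator_of_notMem h]

lemma stmt17_tendsto_bound (x : ℕ → ℝ) (a : ℝ) (hx : Tendsto x atTop (𝓝 a)) :
    ∃ C : ℝ, ∀ n, |x n| ≤ C := by
  obtain ⟨C, hC⟩ := (hx.abs).bddAbove_range
  exact ⟨C, fun n => hC ⟨n, rfl⟩⟩

lemma stmt17_cont_const_fun {mG : MeasurableSpace Ω} {T : (Ω → ℝ) → ℝ}
    (hPC : GPC mG T) {A : Set Ω} (hA : MeasurableSet[mG] A) :
    Continuous (fun x : ℝ => T (A.indicator fun _ => x)) := by
  rw [continuous_iff_seqContinuous]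
  intro x a hx
  obtain ⟨C, hC⟩ := stmt17_tendsto_bound x a hx
  refine hPC _ _ (fun n => stmt17_bddMeas_indicator (stmt17_bddMeas_const mG (x n)) hA)
    (stmt17_bddMeas_indicator (stmt17_bddMeas_const mG a) hA) ⟨C, fun n ω => ?_⟩ (fun ω => ?_)
  · by_cases h : ω ∈ A
    · rw [Set.indicator_of_mem h]; exact hC n
    · rw [Set.indicator_of_notMem h]; simpa using (abs_nonneg _).trans (hC 0)
  · by_cases h : ω ∈ A
    · simpa [Set.indicator_of_mem h] using hx
    · simp [Set.indicator_of_notMem h]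

lemma stmt17_existsConstT {mG : MeasurableSpace Ω} {T : (Ω → ℝ) → ℝ} {f : Ω → ℝ}
    (hPC : GPC mG T) (hNB : GNB mG T f) {A : Set Ω} (hA : MeasurableSet[mG] A) :
    ∃ x : ℝ, T (A.indicator f) = T (A.indicator fun _ => x) := by
  set M := supNorm f with hM
  have hM0 : 0 ≤ M := Real.iSup_nonneg fun ω => abs_nonneg _
  have hle : -M ≤ M := by linarith
  have hcont := (stmt17_cont_const_fun hPC hA).continuousOn (s := Set.Icc (-M) M)
  have hmem : T (A.indicator f) ∈
      Set.Icc (T (A.indicator fun _ => -M)) (T (A.indicator fun _ => M)) :=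
    ⟨(hNB A hA).1, (hNB A hA).2⟩
  obtain ⟨x, _, hx⟩ := intermediate_value_Icc hle hcont hmem
  exact ⟨x, hx.symm⟩

end Stmt17Aux

theorem stmt17 {Ω : Type*} (mF mG : MeasurableSpace Ω) (hsub : mG ≤ mF)
    (T : (Ω → ℝ) → ℝ) (hT0 : T 0 = 0) (hMo : GMo mG T) (hQL : GQL mG T) (hPC : GPC mG T)
    (f : Ω → ℝ) (hf : BddMeas mF f) (hPS : GPS mG T f) (hNB : GNB mG T f)
    (hPi : ∃ (s : Finset ℕ) (A : ℕ → Set Ω),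
      (∀ i ∈ s, MeasurableSet[mG] (A i)) ∧
      (∀ i ∈ s, ∀ j ∈ s, i ≠ j → Disjoint (A i) (A j)) ∧
      (⋃ i ∈ s, A i) = Set.univ ∧
      ∃ i ∈ s, ∃ j ∈ s, ∃ k ∈ s, i ≠ j ∧ i ≠ k ∧ j ≠ k ∧
        0 < T ((A i).indicator fun _ => (1 : ℝ)) ∧
        0 < T ((A j).indicator fun _ => (1 : ℝ)) ∧
        0 < T ((A k).indicator fun _ => (1 : ℝ))) :
    ∀ g₁ g₂ : Ω → ℝ,
      (BddMeas mG g₁ ∧ ∀ A : Set Ω, MeasurableSet[mG] A →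
        T (A.indicator g₁) ≤ T (A.indicator f)) →
      (BddMeas mG g₂ ∧ ∀ A : Set Ω, MeasurableSet[mG] A →
        T (A.indicator g₂) ≤ T (A.indicator f)) →
      (BddMeas mG (fun ω => max (g₁ ω) (g₂ ω)) ∧ ∀ A : Set Ω, MeasurableSet[mG] A →
        T (A.indicator fun ω => max (g₁ ω) (g₂ ω)) ≤ T (A.indicator f)) := by
  intro g₁ g₂ h1 h2
  obtain ⟨hg₁, hT1⟩ := h1
  obtain ⟨hg₂, hT2⟩ := h2
  constructor
  · refine ⟨hg₁.1.max hg₂.1, ?_⟩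
    obtain ⟨C₁, hC₁⟩ := hg₁.2
    obtain ⟨C₂, hC₂⟩ := hg₂.2
    refine ⟨max C₁ C₂, fun ω => ?_⟩
    rw [abs_le]
    constructor
    · calc -(max C₁ C₂) ≤ -C₁ := neg_le_neg (le_max_left _ _)
        _ ≤ g₁ ω := (abs_le.mp (hC₁ ω)).1
        _ ≤ max (g₁ ω) (g₂ ω) := le_max_left _ _
    · exact max_le ((abs_le.mp (hC₁ ω)).2.trans (le_max_left _ _))
        ((abs_le.mp (hC₂ ω)).2.trans (le_max_right _ _))
  · intro A hA
    set B : Set Ω := {ω | g₂ ω ≤ g₁ ω} with hBdef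
    have hB : MeasurableSet[mG] B := measurableSet_le hg₂.1 hg₁.1
    set A₁ := A ∩ B with hA₁def
    set A₂ := A ∩ Bᶜ with hA₂def
    have hA₁ : MeasurableSet[mG] A₁ := hA.inter hB
    have hA₂ : MeasurableSet[mG] A₂ := hA.inter hB.compl
    have hdisj : Disjoint A₁ A₂ := Set.disjoint_left.mpr fun ω h1 h2 => h2.2 h1.2
    have hsub21 : A₂ ⊆ A₁ᶜ := fun ω h hmem => h.2 hmem.2
    have hsub12 : A₁ ⊆ A₂ᶜ := fun ω h hmem => hmem.2 h.2
    obtain ⟨x₁, hx₁⟩ := stmt17_existsConstT hPC hNB hA₁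
    obtain ⟨x₂, hx₂⟩ := stmt17_existsConstT hPC hNB hA₂
    have hdecomp : A.indicator (fun ω => max (g₁ ω) (g₂ ω))
        = A₁.indicator g₁ + A₂.indicator g₂ := by
      funext ω
      by_cases hAω : ω ∈ A
      · by_cases hBω : ω ∈ B
        · have hmem1 : ω ∈ A₁ := ⟨hAω, hBω⟩
          have hnot2 : ω ∉ A₂ := fun h => h.2 hBω
          have hle : g₂ ω ≤ g₁ ω := hBω
          rw [Set.indicator_of_mem hAω, Pi.add_apply, Set.indicator_of_mem hmem1,
            Set.indicator_of_notMem hnot2, add_zero, max_eq_left hle]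
        · have hmem2 : ω ∈ A₂ := ⟨hAω, hBω⟩
          have hnot1 : ω ∉ A₁ := fun h => hBω h.2
          have hle : g₁ ω ≤ g₂ ω := (not_le.mp hBω).le
          rw [Set.indicator_of_mem hAω, Pi.add_apply, Set.indicator_of_mem hmem2,
            Set.indicator_of_notMem hnot1, zero_add, max_eq_right hle]
      · have hnot1 : ω ∉ A₁ := fun h => hAω h.1
        have hnot2 : ω ∉ A₂ := fun h => hAω h.1
        rw [Set.indicator_of_notMem hAω, Pi.add_apply,
          Set.indicator_of_notMem hnot1, Set.indicator_of_notMem hnot2, add_zero]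
    have hzero : ∀ S : Set Ω, S.indicator (fun _ => (0:ℝ)) = 0 := by
      intro S; funext ω; by_cases h : ω ∈ S
      · rw [Set.indicator_of_mem h]; rfl
      · rw [Set.indicator_of_notMem h]; rfl
    have step1 : T (A₁.indicator g₁ + A₂.indicator g₂)
        ≤ T (A₁.indicator (fun _ => x₁) + A₂.indicator g₂) := by
      have hwit : ∃ gb : Ω → ℝ, BddMeas mG gb ∧
          T (A₁.indicator g₁ + A₁ᶜ.indicator gb)
            ≤ T (A₁.indicator (fun _ => x₁) + A₁ᶜ.indicator gb) := by
        refine ⟨fun _ => 0, stmt17_bddMeas_const mG 0, ?_⟩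
        rw [hzero A₁ᶜ, add_zero, add_zero]
        exact (hT1 A₁ hA₁).trans_eq hx₁
      have h := hQL g₁ (fun _ => x₁) hg₁ (stmt17_bddMeas_const mG x₁) A₁ hA₁ hwit
        (A₂.indicator g₂) (stmt17_bddMeas_indicator hg₂ hA₂)
      have heq : A₁ᶜ.indicator (A₂.indicator g₂) = A₂.indicator g₂ := by
        rw [Set.indicator_indicator, Set.inter_eq_self_of_subset_right hsub21]
      rwa [heq] at h
    have step2 : T (A₁.indicator (fun _ => x₁) + A₂.indicator g₂)
        ≤ T (A₁.indicator (fun _ => x₁) + A₂.indicator (fun _ => x₂)) := by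
      have hwit : ∃ gb : Ω → ℝ, BddMeas mG gb ∧
          T (A₂.indicator g₂ + A₂ᶜ.indicator gb)
            ≤ T (A₂.indicator (fun _ => x₂) + A₂ᶜ.indicator gb) := by
        refine ⟨fun _ => 0, stmt17_bddMeas_const mG 0, ?_⟩
        rw [hzero A₂ᶜ, add_zero, add_zero]
        exact (hT2 A₂ hA₂).trans_eq hx₂
      have h := hQL g₂ (fun _ => x₂) hg₂ (stmt17_bddMeas_const mG x₂) A₂ hA₂ hwit
        (A₁.indicator (fun _ => x₁))
        (stmt17_bddMeas_indicator (stmt17_bddMeas_const mG x₁) hA₁)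
      have heq : A₂ᶜ.indicator (A₁.indicator (fun _ => x₁))
          = A₁.indicator (fun _ => x₁) := by
        rw [Set.indicator_indicator, Set.inter_eq_self_of_subset_right hsub12]
      rw [heq] at h
      calc T (A₁.indicator (fun _ => x₁) + A₂.indicator g₂)
          = T (A₂.indicator g₂ + A₁.indicator (fun _ => x₁)) := by rw [add_comm]
        _ ≤ T (A₂.indicator (fun _ => x₂) + A₁.indicator (fun _ => x₁)) := h
        _ = T (A₁.indicator (fun _ => x₁) + A₂.indicator (fun _ => x₂)) := by rw [add_comm]
    have step3 : T (A₁.indicator f + A₂.indicator f)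
        = T (A₁.indicator (fun _ => x₁) + A₂.indicator (fun _ => x₂)) :=
      hPS A₁ A₂ hA₁ hA₂ hdisj x₁ x₂ hx₁ hx₂
    have step4 : A₁.indicator f + A₂.indicator f = A.indicator f := by
      funext ω
      by_cases hAω : ω ∈ A
      · by_cases hBω : ω ∈ B
        · have hmem1 : ω ∈ A₁ := ⟨hAω, hBω⟩
          have hnot2 : ω ∉ A₂ := fun h => h.2 hBω
          rw [Pi.add_apply, Set.indicator_of_mem hmem1, Set.indicator_of_notMem hnot2,
            add_zero, Set.indicator_of_mem hAω]
        · have hmem2 : ω ∈ A₂ := ⟨hAω, hBω⟩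
          have hnot1 : ω ∉ A₁ := fun h => hBω h.2
          rw [Pi.add_apply, Set.indicator_of_mem hmem2, Set.indicator_of_notMem hnot1,
            zero_add, Set.indicator_of_mem hAω]
      · have hnot1 : ω ∉ A₁ := fun h => hAω h.1
        have hnot2 : ω ∉ A₂ := fun h => hAω h.1
        rw [Pi.add_apply, Set.indicator_of_notMem hnot1, Set.indicator_of_notMem hnot2,
          add_zero, Set.indicator_of_notMem hAω]
    calc T (A.indicator fun ω => max (g₁ ω) (g₂ ω))
        = T (A₁.indicator g₁ + A₂.indicator g₂) := by rw [hdecomp]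
      _ ≤ T (A₁.indicator (fun _ => x₁) + A₂.indicator g₂) := step1
      _ ≤ T (A₁.indicator (fun _ => x₁) + A₂.indicator (fun _ => x₂)) := step2
      _ = T (A₁.indicator f + A₂.indicator f) := step3.symm
      _ = T (A.indicator f) := by rw [step4]
end

section
/- Suppose T : L^∞(Ω,F) → ℝ satisfies T(0) = 0, (G-Mo), (G-QL), (G-PC). Then N_G = {N ∈ G : T(1_N) = 0}, i.e., an event N ∈ G is irrelevant for T if and only if T(1_N) = 0. -/
open Filter Topology MeasureTheory

theorem stmt18 {Ω : Type*} (mF mG : MeasurableSpace Ω) (hsub : mG ≤ mF)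
    (T : (Ω → ℝ) → ℝ) (hT0 : T 0 = 0) (hMo : GMo mG T) (hQL : GQL mG T) (hPC : GPC mG T) :
    NullG mG T =
      {N : Set Ω | MeasurableSet[mG] N ∧ T (N.indicator fun _ => (1 : ℝ)) = 0} := by
  have hbdd : ∀ c : ℝ, BddMeas mG (fun _ : Ω => c) := fun c =>
    ⟨measurable_const, |c|, fun _ => le_refl _⟩
  ext N
  constructor
  · rintro ⟨hN, hnull⟩
    refine ⟨hN, ?_⟩
    have := hnull (fun _ => 0) (fun _ => 1) (hbdd 0) (hbdd 1)
    have h0 : (fun _ : Ω => (0:ℝ)) = 0 := rfl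
    rw [h0, zero_add] at this
    rw [this, hT0]
  · rintro ⟨hN, hT1⟩
    by_contra hnot
    have hnot' : N ∉ NullG mG T := fun h => hnot ⟨hN, fun _ _ => (h.2 _ _)⟩
    have := hMo 0 1 one_pos (fun _ => 0) (hbdd 0) N hN hnot'
    have e1 : (N.indicator (fun _ => (0:ℝ)) + Nᶜ.indicator fun _ => (0:ℝ)) = 0 := by
      funext ω; simp [Set.indicator]
    have e2 : (N.indicator (fun _ => (1:ℝ)) + Nᶜ.indicator fun _ => (0:ℝ))
        = N.indicator fun _ => (1:ℝ) := by
      funext ω; simp [Set.indicator]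
    rw [e1, e2, hT0, hT1] at this
    exact lt_irrefl 0 this
end
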